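/- arXiv:1611.10065 — 3 statements merged into one kernel-verified Lean document; each statement's English description precedes it below -/
import Mathlib

section
/- Let S be a set, φ : S → S injective, 1 ∈ S, 1 ∉ φ(S), and let N = ⋂ {K ⊆ S | 1 ∈ K ∧ φ(K) ⊆ K}. Then the restriction of φ to N maps N into N, is injective, 1 ∈ N, 1 ∉ φ(N), and every element of N other than 1 is in φ(N). Hence (N, φ|_N, 1) satisfies all five Peano/Dedekind conditions. -/
namespace Set

variable {S : Type*} (φ : S → S) (a : S)

def dedekindChain : Set S := ⋂₀ {K : Set S | a ∈ K ∧ φ '' K ⊆ K}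

theorem mem_dedekindChain_self : a ∈ dedekindChain φ a := fun _ hK => hK.1

theorem image_dedekindChain_subset : φ '' dedekindChain φ a ⊆ dedekindChain φ a := by
  rintro _ ⟨x, hx, rfl⟩ K hK
  exact hK.2 ⟨x, hx K hK, rfl⟩

theorem dedekindChain_subset {K : Set S} (ha : a ∈ K) (hK : φ '' K ⊆ K) :
    dedekindChain φ a ⊆ K :=
  sInter_subset_of_mem ⟨ha, hK⟩

theorem dedekindChain_eq_insert_image :
    dedekindChain φ a = insert a (φ '' dedekindChain φ a) := by
  have hins : insert a (φ '' dedekindChain φ a) ⊆ dedekindChain φ a :=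
    insert_subset (mem_dedekindChain_self φ a) (image_dedekindChain_subset φ a)
  exact (dedekindChain_subset φ a (mem_insert _ _)
    ((image_mono hins).trans (subset_insert _ _))).antisymm hins

end Set

open Set in
theorem stmt_4 {S : Type*} (φ : S → S) (one : S)
    (hinj : Function.Injective φ) (hone : one ∉ Set.range φ)
    (N : Set S) (hN : N = ⋂₀ {K : Set S | one ∈ K ∧ φ '' K ⊆ K}) :
    φ '' N ⊆ N ∧ Set.InjOn φ N ∧ one ∈ N ∧ one ∉ φ '' N ∧
      ∀ n ∈ N, n ≠ one → n ∈ φ '' N := by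
  obtain rfl : N = dedekindChain φ one := hN
  refine ⟨image_dedekindChain_subset φ one, hinj.injOn, mem_dedekindChain_self φ one,
    fun h => hone (image_subset_range φ _ h), fun n hn hne => ?_⟩
  rw [dedekindChain_eq_insert_image] at hn
  exact hn.resolve_left hne
end

section
/- Recursion theorem (Dedekind's Satz 126): given a simply infinite system (N, φ, 1), a set Ω, an element ω ∈ Ω, and a map θ : Ω → Ω, there exists a unique map ψ : N → Ω such that ψ(1) = ω and ψ(φ(n)) = θ(ψ(n)) for all n ∈ N. -/
/-! The map `k ↦ φ^[k] one` is a bijection `ℕ → N`: injective because `φ` is injective and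
misses `one`, surjective because its range is a chain containing `one`. Transporting the
recursion `k ↦ θ^[k] ω` along it gives existence; uniqueness is induction over chains. -/

section SimplyInfinite

variable {N : Type*} {φ : N → N} {one : N}

theorem chain_induction (hchain : ∀ K : Set N, one ∈ K → φ '' K ⊆ K → K = Set.univ)
    {p : N → Prop} (h_one : p one) (h_step : ∀ n, p n → p (φ n)) (n : N) : p n :=
  Set.eq_univ_iff_forall.mp (hchain {n | p n} h_one (Set.image_subset_iff.mpr h_step)) n

theorem injective_iterate_apply (hinj : Function.Injective φ) (hone : one ∉ Set.range φ) :
    Function.Injective fun k : ℕ => φ^[k] one := by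
  intro a
  induction a with
  | zero =>
    rintro (_ | b) h
    · rfl
    · exact absurd ⟨_, (Function.iterate_succ_apply' φ b one).symm.trans h.symm⟩ hone
  | succ a ih =>
    rintro (_ | b) h
    · exact absurd ⟨_, (Function.iterate_succ_apply' φ a one).symm.trans h⟩ hone
    · simp only [Function.iterate_succ_apply'] at h
      exact congrArg Nat.succ (ih (hinj h))

theorem surjective_iterate_apply (hchain : ∀ K : Set N, one ∈ K → φ '' K ⊆ K → K = Set.univ) :
    Function.Surjective fun k : ℕ => φ^[k] one :=
  chain_induction hchain ⟨0, rfl⟩ fun _ ⟨k, hk⟩ =>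
    ⟨k + 1, (Function.iterate_succ_apply' φ k one).trans (congrArg φ hk)⟩

theorem eq_of_recursion (hchain : ∀ K : Set N, one ∈ K → φ '' K ⊆ K → K = Set.univ)
    {Ω : Type*} {θ : Ω → Ω} {ψ ψ' : N → Ω} (h_one : ψ one = ψ' one)
    (hψ : ∀ n, ψ (φ n) = θ (ψ n)) (hψ' : ∀ n, ψ' (φ n) = θ (ψ' n)) : ψ = ψ' :=
  funext <| chain_induction hchain h_one fun n hn => by rw [hψ, hψ', hn]

end SimplyInfinite

theorem stmt_7 {N : Type*} (φ : N → N) (one : N)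
    (hinj : Function.Injective φ) (hone : one ∉ Set.range φ)
    (hchain : ∀ K : Set N, one ∈ K → φ '' K ⊆ K → K = Set.univ)
    {Ω : Type*} (ω : Ω) (θ : Ω → Ω) :
    ∃! ψ : N → Ω, ψ one = ω ∧ ∀ n, ψ (φ n) = θ (ψ n) := by
  let e : ℕ ≃ N :=
    .ofBijective _ ⟨injective_iterate_apply hinj hone, surjective_iterate_apply hchain⟩
  have e_succ (k : ℕ) : e (k + 1) = φ (e k) := Function.iterate_succ_apply' φ k one
  have e_symm_φ (n : N) : e.symm (φ n) = e.symm n + 1 := by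
    rw [e.symm_apply_eq, e_succ, e.apply_symm_apply]
  let ψ₀ : N → Ω := fun n => θ^[e.symm n] ω
  have ψ₀_one : ψ₀ one = ω := by
    have e_symm_one : e.symm one = 0 := e.symm_apply_eq.mpr rfl
    simp only [ψ₀, e_symm_one, Function.iterate_zero, id]
  have ψ₀_φ (n : N) : ψ₀ (φ n) = θ (ψ₀ n) := by
    simp only [ψ₀, e_symm_φ, Function.iterate_succ_apply']
  exact ⟨ψ₀, ⟨ψ₀_one, ψ₀_φ⟩, fun ψ ⟨h_one, hψ⟩ =>
    eq_of_recursion hchain (h_one.trans ψ₀_one.symm) hψ ψ₀_φ⟩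
end

section
/- Existence of a simply infinite system implies an infinite set exists, and conversely: if S is Dedekind-infinite (admits an injective non-surjective self-map φ, with some 1 ∉ φ(S)), then the chain of 1 under φ is a simply infinite system. -/
theorem infinite_of_injective_of_notMem_range {α : Type*} {f : α → α} {a : α}
    (hf : Function.Injective f) (ha : a ∉ Set.range f) : Infinite α :=
  not_finite_iff_infinite.mp fun _ ↦ ha (Finite.surjective_of_injective hf a)

section DedekindChain

variable {α : Type*} (f : α → α) (a : α)

def dedekindChain : Set α := ⋂₀ {K | a ∈ K ∧ f '' K ⊆ K}

theorem mem_dedekindChain_self : a ∈ dedekindChain f a :=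
  Set.mem_sInter.mpr fun _ hK ↦ hK.1

variable {f a}

theorem dedekindChain_subset {K : Set α} (ha : a ∈ K) (hK : f '' K ⊆ K) :
    dedekindChain f a ⊆ K :=
  Set.sInter_subset_of_mem ⟨ha, hK⟩

variable (f a)

theorem image_dedekindChain_subset : f '' dedekindChain f a ⊆ dedekindChain f a :=
  Set.subset_sInter fun _ hK ↦
    (Set.image_mono (dedekindChain_subset hK.1 hK.2)).trans hK.2

theorem dedekindChain_eq_sInter_closed_subsets :
    dedekindChain f a = ⋂₀ {K | K ⊆ dedekindChain f a ∧ a ∈ K ∧ f '' K ⊆ K} :=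
  subset_antisymm
    (Set.subset_sInter fun _ hK ↦ dedekindChain_subset hK.2.1 hK.2.2)
    (Set.sInter_subset_of_mem
      ⟨subset_rfl, mem_dedekindChain_self f a, image_dedekindChain_subset f a⟩)

end DedekindChain

theorem stmt_17 {S : Type*} (φ : S → S) (one : S)
    (hinj : Function.Injective φ) (hone : one ∉ Set.range φ)
    (N : Set S) (hN : N = ⋂₀ {K : Set S | one ∈ K ∧ φ '' K ⊆ K}) :
    Infinite S ∧
    (Set.InjOn φ N ∧ φ '' N ⊆ N ∧ one ∈ N ∧ one ∉ φ '' N ∧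
      N = ⋂₀ {K : Set S | K ⊆ N ∧ one ∈ K ∧ φ '' K ⊆ K}) := by
  change N = dedekindChain φ one at hN
  subst hN
  exact ⟨infinite_of_injective_of_notMem_range hinj hone, hinj.injOn,
    image_dedekindChain_subset φ one, mem_dedekindChain_self φ one,
    fun h ↦ hone (Set.image_subset_range φ _ h), dedekindChain_eq_sInter_closed_subsets φ one⟩
end
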